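/- arXiv:1606.01414 — 2 statements merged into one kernel-verified Lean document; each statement's English description precedes it below -/
import Mathlib

section
/- For a finite abelian group A, there is a short exact sequence 0 → Hom(S²(A), ℝ/ℤ) → Quad(A, ℝ/ℤ) → A/2A → 0, where the quotient Quad(A, ℝ/ℤ)/Quad₀(A, ℝ/ℤ) is isomorphic to A/2A. -/
variable {A B : Type*} [AddCommGroup A] [AddCommGroup B]

/-- The polarization of a map between abelian groups. -/
def polz (γ : A → B) (x y : A) : B := γ (x + y) - γ x - γ y

/-- A quadratic form between abelian groups: even, with bilinear polarization. -/
def IsQuadratic (γ : A → B) : Prop :=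
  (∀ a, γ a = γ (-a)) ∧
  (∀ x x' y, polz γ (x + x') y = polz γ x y + polz γ x' y) ∧
  (∀ x y y', polz γ x (y + y') = polz γ x y + polz γ x y')

lemma polz_add_fun (f g : A → B) (x y : A) :
    polz (f + g) x y = polz f x y + polz g x y := by
  simp only [polz, Pi.add_apply]; abel

lemma polz_neg_fun (f : A → B) (x y : A) :
    polz (-f) x y = - polz f x y := by
  simp only [polz, Pi.neg_apply]; abel

/-- The group of `ℝ/ℤ`-valued quadratic forms on `A`. -/
noncomputable def QuadGroup (A : Type*) [AddCommGroup A] : AddSubgroup (A → AddCircle (1 : ℝ)) where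
  carrier := {γ | IsQuadratic γ}
  zero_mem' := ⟨fun _ => rfl, fun _ _ _ => by simp [polz], fun _ _ _ => by simp [polz]⟩
  add_mem' := by
    rintro f g ⟨hf1, hf2, hf3⟩ ⟨hg1, hg2, hg3⟩
    refine ⟨fun a => by simp only [Pi.add_apply, hf1 a, hg1 a], fun x x' y => ?_,
      fun x y y' => ?_⟩
    · rw [polz_add_fun, polz_add_fun, polz_add_fun, hf2, hg2]; abel
    · rw [polz_add_fun, polz_add_fun, polz_add_fun, hf3, hg3]; abel
  neg_mem' := by
    rintro f ⟨hf1, hf2, hf3⟩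
    refine ⟨fun a => by simp only [Pi.neg_apply, hf1 a], fun x x' y => ?_, fun x y y' => ?_⟩
    · rw [polz_neg_fun, polz_neg_fun, polz_neg_fun, hf2]; abel
    · rw [polz_neg_fun, polz_neg_fun, polz_neg_fun, hf3]; abel

/-- The subgroup `Quad₀(A,ℝ/ℤ)` of quadratic forms with `o(a)·q(a) = 0` for all `a`. -/
noncomputable def quadGroup0 (A : Type*) [AddCommGroup A] :
    AddSubgroup (A → AddCircle (1 : ℝ)) where
  carrier := {γ | IsQuadratic γ ∧ ∀ a : A, addOrderOf a • γ a = 0}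
  zero_mem' := ⟨(QuadGroup A).zero_mem, fun a => smul_zero _⟩
  add_mem' := by
    rintro f g ⟨hf, hf0⟩ ⟨hg, hg0⟩
    exact ⟨(QuadGroup A).add_mem hf hg,
      fun a => by simp only [Pi.add_apply, smul_add, hf0 a, hg0 a, add_zero]⟩
  neg_mem' := by
    rintro f ⟨hf, hf0⟩
    exact ⟨(QuadGroup A).neg_mem hf,
      fun a => by simp only [Pi.neg_apply, smul_neg, hf0 a, neg_zero]⟩

open TensorProduct in
/-- The second symmetric power `S²(A) = (A ⊗ A)/⟨a⊗b - b⊗a⟩` of `A` as a ℤ-module. -/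
abbrev symPower2 (A : Type*) [AddCommGroup A] :=
  (TensorProduct ℤ A A) ⧸
    (Submodule.span ℤ {x : TensorProduct ℤ A A | ∃ a b : A, x = a ⊗ₜ[ℤ] b - b ⊗ₜ[ℤ] a})
/-- The subgroup `2A = {2a : a ∈ A}`. -/
def twoSub (A : Type*) [AddCommGroup A] : AddSubgroup A :=
  (zsmulAddGroupHom 2 : A →+ A).range

/-- `Quad₀(A)` viewed as a subgroup of `Quad(A)`. -/
noncomputable def quadGroup0' (A : Type*) [AddCommGroup A] : AddSubgroup (QuadGroup A) :=
  (quadGroup0 A).comap (QuadGroup A).subtype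

/-!
The two isomorphisms are not canonical, so we argue through the structure theorem
`A ≃ ⨁ ZMod dᵢ`, using that both statements are invariant under isomorphism and compatible with
finite products. `Hom(S²(A), ℝ/ℤ)` is the group of symmetric bilinear forms on `A`.

A quadratic form on `M × N` is `q₁ a + q₂ b + β a b` with `q₁`, `q₂` quadratic and `β`
bilinear, and it lies in `Quad₀` exactly when `q₁` and `q₂` do; symmetric bilinear forms on `M × N`
split in the same way. Hence `Quad₀(M × N) ≃ Quad₀(M) × Quad₀(N) × Bil(M, N)`, and
`Quad/Quad₀`, like `A/2A`, turns products into products.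

On `ZMod n` a quadratic form is `c ↦ c² • α` with `α = q 1`, and it lies in `Quad₀` iff
`n • α = 0`; so `Quad₀(ZMod n)` and the symmetric bilinear forms are both `(ℝ/ℤ)[n]`. The
obstruction `n • α` is `2`-torsion; it vanishes for odd `n` (then `Quad = Quad₀` and `2A = A`), and
for even `n` it takes the value `1/2` at `α = 1/2n`, so that `Quad/Quad₀ ≃ ZMod 2 ≃ A/2A`.
-/

section Polarization

variable {A B C : Type*} [AddCommGroup A] [AddCommGroup B] [AddCommGroup C]

lemma map_add_eq_polz (q : A → C) (x y : A) : q (x + y) = q x + q y + polz q x y := by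
  simp only [polz]; abel

lemma polz_comm (q : A → C) (x y : A) : polz q x y = polz q y x := by
  simp only [polz, add_comm]; abel

lemma polz_comp (q : B → C) (f : A →+ B) (x y : A) :
    polz (q ∘ f) x y = polz q (f x) (f y) := by
  simp [polz]

namespace IsQuadratic

variable {q : A → C} (hq : IsQuadratic q)
include hq

lemma polz_zero_left (y : A) : polz q 0 y = 0 := by
  simpa using hq.2.1 0 0 y

lemma polz_zero_right (x : A) : polz q x 0 = 0 := by
  rw [polz_comm]; exact hq.polz_zero_left x

lemma map_zero : q 0 = 0 := by
  simpa [polz] using hq.polz_zero_left 0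

lemma polz_nsmul_left (k : ℕ) (x y : A) : polz q (k • x) y = k • polz q x y := by
  induction k with
  | zero => simpa using hq.polz_zero_left y
  | succ k ih => rw [succ_nsmul, hq.2.1, ih, succ_nsmul]

lemma polz_self (a : A) : polz q a a = 2 • q a := by
  have h := hq.2.1 a (-a) a
  rw [add_neg_cancel, hq.polz_zero_left] at h
  simp only [polz, neg_add_cancel, hq.map_zero, ← hq.1 a] at h
  calc polz q a a = (q (a + a) - q a - q a + (0 - q a - q a)) + 2 • q a := by
        simp only [polz]; abel
    _ = 2 • q a := by rw [← h, zero_add]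

lemma map_nsmul (k : ℕ) (a : A) : q (k • a) = (k * k) • q a := by
  induction k with
  | zero => simpa using hq.map_zero
  | succ k ih =>
    rw [succ_nsmul, map_add_eq_polz q, hq.polz_nsmul_left, hq.polz_self, ih, ← mul_nsmul',
      ← succ_nsmul, ← add_nsmul]
    congr 1
    ring

lemma addOrderOf_nsmul_two_nsmul (a : A) : addOrderOf a • 2 • q a = 0 := by
  rw [← hq.polz_self, ← hq.polz_nsmul_left, addOrderOf_nsmul_eq_zero, hq.polz_zero_left]

/-- With `o = o(a)`, both `2 o` and `o²` kill `q a` (the latter as `o² • q a = q (o • a)`), and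
for odd `o = 2m + 1` we have `o = o² - m • 2 o`. -/
lemma addOrderOf_nsmul_eq_zero_of_odd {a : A} (ha : Odd (addOrderOf a)) :
    addOrderOf a • q a = 0 := by
  obtain ⟨m, hm⟩ := ha
  have hsq := hq.map_nsmul (addOrderOf a) a
  rw [addOrderOf_nsmul_eq_zero, hq.map_zero] at hsq
  have h2 : addOrderOf a * addOrderOf a = m * (addOrderOf a * 2) + addOrderOf a := by
    nth_rewrite 1 [hm]; ring
  rw [h2, add_nsmul, mul_nsmul', mul_nsmul', hq.addOrderOf_nsmul_two_nsmul, smul_zero,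
    zero_add] at hsq
  exact hsq.symm

lemma comp (f : B →+ A) : IsQuadratic (q ∘ f) :=
  ⟨fun a => by simp [hq.1 (f a)], fun x x' y => by simp only [polz_comp, map_add, hq.2.1],
    fun x y y' => by simp only [polz_comp, map_add, hq.2.2]⟩

end IsQuadratic

lemma IsQuadratic.of_comp_surjective {q : A → C} {f : B →+ A} (hf : Function.Surjective f)
    (h : IsQuadratic (q ∘ f)) : IsQuadratic q := by
  refine ⟨hf.forall.2 fun a => ?_, hf.forall₃.2 fun x x' y => ?_,
    hf.forall₃.2 fun x y y' => ?_⟩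
  · simpa using h.1 a
  · simpa only [← map_add, ← polz_comp] using h.2.1 x x' y
  · simpa only [← map_add, ← polz_comp] using h.2.2 x y y'

end Polarization

section SymPower2

open TensorProduct

variable (A C : Type*) [AddCommGroup A] [AddCommGroup C]

def symBil : AddSubgroup (A →+ A →+ C) where
  carrier := {β | ∀ x y, β x y = β y x}
  zero_mem' _ _ := rfl
  add_mem' hβ hγ x y := by simp only [AddMonoidHom.add_apply, hβ x y, hγ x y]
  neg_mem' hβ x y := by simp only [AddMonoidHom.neg_apply, hβ x y]

variable {A C}

abbrev symMul (a b : A) : symPower2 A := Submodule.Quotient.mk (a ⊗ₜ[ℤ] b)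

lemma symMul_comm (a b : A) : symMul a b = symMul b a :=
  (Submodule.Quotient.eq _).mpr (Submodule.subset_span ⟨a, b, rfl⟩)

@[ext]
lemma symPower2_addHom_ext {f g : symPower2 A →+ C} (h : ∀ a b, f (symMul a b) = g (symMul a b)) :
    f = g := by
  ext x
  obtain ⟨x, rfl⟩ := Submodule.Quotient.mk_surjective _ x
  induction x using TensorProduct.induction_on with
  | zero => simp
  | tmul a b => exact h a b
  | add u v hu hv => rw [Submodule.Quotient.mk_add, map_add, map_add, hu, hv]

def symBilOfHom (φ : symPower2 A →+ C) : symBil A C :=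
  ⟨AddMonoidHom.mk' (fun a => AddMonoidHom.mk' (fun b => φ (symMul a b))
      (fun b b' => by simp only [symMul, tmul_add, Submodule.Quotient.mk_add, map_add]))
    (fun a a' => by ext b; simp only [symMul, add_tmul, Submodule.Quotient.mk_add, map_add,
      AddMonoidHom.mk'_apply, AddMonoidHom.add_apply]),
    fun a b => by simp only [AddMonoidHom.mk'_apply, symMul_comm a b]⟩

@[simp]
lemma symBilOfHom_apply (φ : symPower2 A →+ C) (a b : A) :
    (symBilOfHom φ : A →+ A →+ C) a b = φ (symMul a b) := rfl

noncomputable def symPower2Lift (β : symBil A C) : symPower2 A →+ C :=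
  let lift : A ⊗[ℤ] A →+ C := liftAddHom (β : A →+ A →+ C) fun r a b => by
    simp only [map_zsmul, AddMonoidHom.zsmul_apply]
  (Submodule.liftQ _ lift.toIntLinearMap <| (Submodule.span_le).2 <| by
    rintro _ ⟨a, a', rfl⟩
    simp [lift, β.2 a a']).toAddMonoidHom

@[simp]
lemma symPower2Lift_symMul (β : symBil A C) (a b : A) :
    symPower2Lift β (symMul a b) = (β : A →+ A →+ C) a b := by
  simp [symPower2Lift]

noncomputable def homSymPower2EquivSymBil : (symPower2 A →+ C) ≃+ symBil A C where
  toFun := symBilOfHom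
  invFun := symPower2Lift
  left_inv φ := by ext a b; simp
  right_inv β := by ext a b; simp
  map_add' φ ψ := rfl

end SymPower2

lemma mem_twoSub {A : Type*} [AddCommGroup A] {x : A} : x ∈ twoSub A ↔ ∃ y, y + y = x := by
  simp [twoSub, two_zsmul]

section Transport

variable {A A' C : Type*} [AddCommGroup A] [AddCommGroup A'] [AddCommGroup C] (e : A ≃+ A')

lemma isQuadratic_comp_addEquiv_iff {q : A' → C} : IsQuadratic (q ∘ e) ↔ IsQuadratic q :=
  ⟨IsQuadratic.of_comp_surjective (f := e.toAddMonoidHom) e.surjective,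
    fun hq => hq.comp e.toAddMonoidHom⟩

lemma comp_mem_quadGroup0_iff {q : A' → UnitAddCircle} :
    q ∘ e ∈ quadGroup0 A ↔ q ∈ quadGroup0 A' := by
  simp only [quadGroup0, AddSubgroup.mem_mk, AddSubmonoid.mem_mk, AddSubsemigroup.mem_mk,
    Set.mem_ofPred_eq, isQuadratic_comp_addEquiv_iff, Function.comp_apply, e.surjective.forall,
    e.addOrderOf_eq]

noncomputable def quadGroupComap (f : A →+ A') : QuadGroup A' →+ QuadGroup A where
  toFun q := ⟨q.1 ∘ f, q.2.comp f⟩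
  map_zero' := rfl
  map_add' _ _ := rfl

@[simp]
lemma coe_quadGroupComap (f : A →+ A') (q : QuadGroup A') :
    (quadGroupComap f q : A → UnitAddCircle) = q ∘ f := rfl

noncomputable def quadGroupCongr : QuadGroup A ≃+ QuadGroup A' :=
  AddMonoidHom.toAddEquiv (quadGroupComap e.symm.toAddMonoidHom)
    (quadGroupComap e.toAddMonoidHom) (by ext; simp) (by ext; simp)

noncomputable def quadGroup0Congr : quadGroup0 A ≃+ quadGroup0 A' where
  toFun q := ⟨q.1 ∘ e.symm, (comp_mem_quadGroup0_iff e.symm).2 q.2⟩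
  invFun q := ⟨q.1 ∘ e, (comp_mem_quadGroup0_iff e).2 q.2⟩
  left_inv q := by ext; simp
  right_inv q := by ext; simp
  map_add' _ _ := rfl

noncomputable def quadQuotCongr :
    (QuadGroup A ⧸ quadGroup0' A) ≃+ (QuadGroup A' ⧸ quadGroup0' A') :=
  QuotientAddGroup.congr _ _ (quadGroupCongr e) <| by
    ext q
    exact AddSubgroup.mem_map_equiv.trans (comp_mem_quadGroup0_iff e)

lemma map_twoSub : (twoSub A).map e.toAddMonoidHom = twoSub A' := by
  ext x
  rw [AddSubgroup.mem_map_equiv, mem_twoSub, mem_twoSub, e.surjective.exists]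
  simp only [← map_add, AddEquiv.eq_symm_apply]

noncomputable def twoSubQuotCongr : (A ⧸ twoSub A) ≃+ (A' ⧸ twoSub A') :=
  QuotientAddGroup.congr _ _ e (map_twoSub e)

noncomputable def symBilCongr : symBil A C ≃+ symBil A' C where
  toFun β := ⟨(β.1.comp e.symm.toAddMonoidHom).compl₂ e.symm.toAddMonoidHom,
    fun x y => by simp [β.2 (e.symm x)]⟩
  invFun β := ⟨(β.1.comp e.toAddMonoidHom).compl₂ e.toAddMonoidHom,
    fun x y => by simp [β.2 (e x)]⟩
  left_inv β := by ext; simp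
  right_inv β := by ext; simp
  map_add' _ _ := rfl

end Transport

section Prod

variable {M N C : Type*} [AddCommGroup M] [AddCommGroup N] [AddCommGroup C]

lemma apply_mk_eq_polz (q : M × N → C) (a : M) (b : N) :
    q (a, b) = q (a, 0) + q (0, b) + polz q (a, 0) (0, b) := by
  rw [← map_add_eq_polz, Prod.mk_add_mk, add_zero, zero_add]

namespace IsQuadratic

variable {q : M × N → C} (hq : IsQuadratic q)
include hq

def crossTerm : M →+ N →+ C :=
  AddMonoidHom.mk' (fun a => AddMonoidHom.mk' (fun b => polz q (a, 0) (0, b)) fun b b' => by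
      simpa using hq.2.2 (a, 0) (0, b) (0, b'))
    fun a a' => by ext b; simpa using hq.2.1 (a, 0) (a', 0) (0, b)

@[simp]
lemma crossTerm_apply (a : M) (b : N) : hq.crossTerm a b = polz q (a, 0) (0, b) := rfl

end IsQuadratic

def quadGlue (q₁ : M → C) (q₂ : N → C) (β : M →+ N →+ C) (p : M × N) : C :=
  q₁ p.1 + q₂ p.2 + β p.1 p.2

lemma polz_quadGlue (q₁ : M → C) (q₂ : N → C) (β : M →+ N →+ C) (x y : M × N) :
    polz (quadGlue q₁ q₂ β) x y = polz q₁ x.1 y.1 + polz q₂ x.2 y.2 + β x.1 y.2 + β y.1 x.2 := by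
  simp only [polz, quadGlue, Prod.fst_add, Prod.snd_add, map_add, AddMonoidHom.add_apply]
  abel

lemma isQuadratic_quadGlue {q₁ : M → C} {q₂ : N → C} (h₁ : IsQuadratic q₁) (h₂ : IsQuadratic q₂)
    (β : M →+ N →+ C) : IsQuadratic (quadGlue q₁ q₂ β) := by
  refine ⟨fun p => ?_, fun x x' y => ?_, fun x y y' => ?_⟩
  · simp [quadGlue, h₁.1 p.1, h₂.1 p.2]
  · simp only [polz_quadGlue, Prod.fst_add, Prod.snd_add, map_add, AddMonoidHom.add_apply,
      h₁.2.1, h₂.2.1]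
    abel
  · simp only [polz_quadGlue, Prod.fst_add, Prod.snd_add, map_add, AddMonoidHom.add_apply,
      h₁.2.2, h₂.2.2]
    abel

section Glue

variable {q₁ : M → C} {q₂ : N → C} (β : M →+ N →+ C)

lemma quadGlue_comp_inl (h₂ : IsQuadratic q₂) : quadGlue q₁ q₂ β ∘ AddMonoidHom.inl M N = q₁ := by
  ext a; simp [quadGlue, h₂.map_zero]

lemma quadGlue_comp_inr (h₁ : IsQuadratic q₁) : quadGlue q₁ q₂ β ∘ AddMonoidHom.inr M N = q₂ := by
  ext b; simp [quadGlue, h₁.map_zero]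

lemma crossTerm_quadGlue (h₁ : IsQuadratic q₁) (h₂ : IsQuadratic q₂) :
    (isQuadratic_quadGlue h₁ h₂ β).crossTerm = β := by
  ext a b
  simp [polz_quadGlue, h₁.polz_zero_right, h₂.polz_zero_left]

end Glue

lemma IsQuadratic.eq_quadGlue {q : M × N → C} (hq : IsQuadratic q) :
    quadGlue (q ∘ AddMonoidHom.inl M N) (q ∘ AddMonoidHom.inr M N) hq.crossTerm = q := by
  ext ⟨a, b⟩
  exact (apply_mk_eq_polz q a b).symm

lemma nsmul_eq_zero_of_dvd {x : C} {m n : ℕ} (hmn : m ∣ n) (hx : m • x = 0) :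
    n • x = 0 := by
  obtain ⟨k, rfl⟩ := hmn
  rw [mul_nsmul, hx, smul_zero]

lemma mem_quadGroup0_prod_iff {q : M × N → UnitAddCircle} (hq : IsQuadratic q) :
    q ∈ quadGroup0 (M × N) ↔
      q ∘ AddMonoidHom.inl M N ∈ quadGroup0 M ∧ q ∘ AddMonoidHom.inr M N ∈ quadGroup0 N := by
  refine ⟨fun h => ⟨⟨hq.comp _, fun a => ?_⟩, ⟨hq.comp _, fun b => ?_⟩⟩, fun ⟨h₁, h₂⟩ => ⟨hq, ?_⟩⟩
  · simpa [Prod.addOrderOf_mk] using h.2 (a, 0)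
  · simpa [Prod.addOrderOf_mk] using h.2 (0, b)
  rintro ⟨a, b⟩
  have ha : addOrderOf a ∣ addOrderOf (a, b) := by
    rw [Prod.addOrderOf_mk]; exact Nat.dvd_lcm_left _ _
  have hb : addOrderOf b ∣ addOrderOf (a, b) := by
    rw [Prod.addOrderOf_mk]; exact Nat.dvd_lcm_right _ _
  have hcross : addOrderOf (a, b) • ((a, 0) : M × N) = 0 := by
    simp [nsmul_eq_zero_of_dvd ha (addOrderOf_nsmul_eq_zero a)]
  rw [apply_mk_eq_polz q, smul_add, smul_add, ← hq.polz_nsmul_left, hcross, hq.polz_zero_left,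
    nsmul_eq_zero_of_dvd (x := q (a, 0)) ha (h₁.2 a),
    nsmul_eq_zero_of_dvd (x := q (0, b)) hb (h₂.2 b), add_zero, add_zero]

end Prod

section ProdEquiv

variable {M N C : Type*} [AddCommGroup M] [AddCommGroup N] [AddCommGroup C]

noncomputable def quadGroup0ProdEquiv :
    quadGroup0 (M × N) ≃+ quadGroup0 M × quadGroup0 N × (M →+ N →+ UnitAddCircle) where
  toFun q :=
    have h := (mem_quadGroup0_prod_iff q.2.1).1 q.2
    (⟨_, h.1⟩, ⟨_, h.2⟩, q.2.1.crossTerm)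
  invFun t := by
    obtain ⟨⟨q₁, h₁⟩, ⟨q₂, h₂⟩, β⟩ := t
    refine ⟨quadGlue q₁ q₂ β, (mem_quadGroup0_prod_iff (isQuadratic_quadGlue h₁.1 h₂.1 β)).2 ?_⟩
    rw [quadGlue_comp_inl β h₂.1, quadGlue_comp_inr β h₁.1]
    exact ⟨h₁, h₂⟩
  left_inv q := Subtype.ext q.2.1.eq_quadGlue
  right_inv := by
    rintro ⟨⟨q₁, h₁⟩, ⟨q₂, h₂⟩, β⟩
    simp only [quadGlue_comp_inl β h₂.1, quadGlue_comp_inr β h₁.1, crossTerm_quadGlue β h₁.1 h₂.1]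
  map_add' q q' := by
    ext
    · rfl
    · rfl
    · simp [polz_add_fun]

open AddMonoidHom in
def prodBihom (β₁ : M →+ M →+ C) (β₂ : N →+ N →+ C) (γ : M →+ N →+ C) :
    M × N →+ M × N →+ C :=
  (β₁.comp (fst M N)).compl₂ (fst M N) + (β₂.comp (snd M N)).compl₂ (snd M N) +
    (γ.comp (fst M N)).compl₂ (snd M N) + ((γ.comp (fst M N)).compl₂ (snd M N)).flip

@[simp]
lemma prodBihom_apply (β₁ : M →+ M →+ C) (β₂ : N →+ N →+ C) (γ : M →+ N →+ C) (p p' : M × N) :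
    prodBihom β₁ β₂ γ p p' = β₁ p.1 p'.1 + β₂ p.2 p'.2 + γ p.1 p'.2 + γ p'.1 p.2 := rfl

lemma prodBihom_mem_symBil {β₁ : M →+ M →+ C} {β₂ : N →+ N →+ C} (h₁ : β₁ ∈ symBil M C)
    (h₂ : β₂ ∈ symBil N C) (γ : M →+ N →+ C) : prodBihom β₁ β₂ γ ∈ symBil (M × N) C := by
  intro p p'
  simp only [prodBihom_apply, h₁ p.1, h₂ p.2]
  abel

lemma eq_prodBihom {β : M × N →+ M × N →+ C} (hβ : β ∈ symBil (M × N) C) :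
    prodBihom ((β.comp (.inl M N)).compl₂ (.inl M N)) ((β.comp (.inr M N)).compl₂ (.inr M N))
      ((β.comp (.inl M N)).compl₂ (.inr M N)) = β := by
  ext ⟨a, b⟩ ⟨a', b'⟩
  have hp : ∀ (x : M) (y : N), ((x, y) : M × N) = (x, 0) + (0, y) := by simp
  simp only [prodBihom_apply, AddMonoidHom.compl₂_apply, AddMonoidHom.coe_comp,
    Function.comp_apply, AddMonoidHom.inl_apply, AddMonoidHom.inr_apply]
  rw [hp a b, hp a' b']
  simp only [map_add, AddMonoidHom.add_apply, hβ (0, b) (a', 0)]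
  abel

noncomputable def symBilProdEquiv :
    symBil (M × N) C ≃+ symBil M C × symBil N C × (M →+ N →+ C) where
  toFun β :=
    (⟨(β.1.comp (.inl M N)).compl₂ (.inl M N), fun x y => by simp [β.2 (x, 0)]⟩,
      ⟨(β.1.comp (.inr M N)).compl₂ (.inr M N), fun x y => by simp [β.2 (0, x)]⟩,
      (β.1.comp (.inl M N)).compl₂ (.inr M N))
  invFun t := ⟨prodBihom t.1.1 t.2.1.1 t.2.2, prodBihom_mem_symBil t.1.2 t.2.1.2 t.2.2⟩
  left_inv β := Subtype.ext (eq_prodBihom β.2)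
  right_inv t := by ext <;> simp
  map_add' _ _ := rfl

end ProdEquiv

section ProdQuot

variable {M N : Type*} [AddCommGroup M] [AddCommGroup N]

lemma twoSub_prod : twoSub (M × N) = (twoSub M).prod (twoSub N) := by
  ext ⟨a, b⟩
  simp only [AddSubgroup.mem_prod, mem_twoSub, Prod.exists, Prod.mk_add_mk, Prod.mk.injEq]
  exact ⟨fun ⟨x, y, hx, hy⟩ => ⟨⟨x, hx⟩, ⟨y, hy⟩⟩, fun ⟨⟨x, hx⟩, ⟨y, hy⟩⟩ => ⟨x, y, hx, hy⟩⟩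

noncomputable def twoSubQuotProdEquiv :
    ((M × N) ⧸ twoSub (M × N)) ≃+ (M ⧸ twoSub M) × (N ⧸ twoSub N) :=
  (QuotientAddGroup.quotientAddEquivOfEq twoSub_prod).trans (QuotientAddGroup.prodAddEquiv _ _)

noncomputable def quadQuotRestrict :
    QuadGroup (M × N) →+ (QuadGroup M ⧸ quadGroup0' M) × (QuadGroup N ⧸ quadGroup0' N) :=
  ((QuotientAddGroup.mk' _).comp (quadGroupComap (.inl M N))).prod
    ((QuotientAddGroup.mk' _).comp (quadGroupComap (.inr M N)))

lemma quadQuotRestrict_surjective : Function.Surjective (quadQuotRestrict (M := M) (N := N)) := by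
  rintro ⟨x, y⟩
  obtain ⟨q₁, rfl⟩ := QuotientAddGroup.mk'_surjective _ x
  obtain ⟨q₂, rfl⟩ := QuotientAddGroup.mk'_surjective _ y
  refine ⟨⟨quadGlue q₁.1 q₂.1 0, isQuadratic_quadGlue q₁.2 q₂.2 0⟩, ?_⟩
  simp only [quadQuotRestrict, AddMonoidHom.prod_apply, AddMonoidHom.coe_comp,
    Function.comp_apply, Prod.mk.injEq]
  constructor <;> congr 1 <;> ext1
  · exact quadGlue_comp_inl 0 q₂.2
  · exact quadGlue_comp_inr 0 q₁.2

lemma ker_quadQuotRestrict : (quadQuotRestrict (M := M) (N := N)).ker = quadGroup0' (M × N) := by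
  ext q
  simp only [AddMonoidHom.mem_ker, quadQuotRestrict, AddMonoidHom.prod_apply, Prod.mk_eq_zero,
    AddMonoidHom.coe_comp, Function.comp_apply, QuotientAddGroup.mk'_apply,
    QuotientAddGroup.eq_zero_iff]
  exact (mem_quadGroup0_prod_iff q.2).symm

noncomputable def quadQuotProdEquiv :
    (QuadGroup (M × N) ⧸ quadGroup0' (M × N)) ≃+
      (QuadGroup M ⧸ quadGroup0' M) × (QuadGroup N ⧸ quadGroup0' N) :=
  (QuotientAddGroup.quotientAddEquivOfEq ker_quadQuotRestrict.symm).trans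
    (QuotientAddGroup.quotientKerEquivOfSurjective _ quadQuotRestrict_surjective)

end ProdQuot

section ZModBil

variable {n : ℕ} {C : Type*} [AddCommGroup C]

def zmodHom (c : C) (hc : n • c = 0) : ZMod n →+ C :=
  ZMod.lift n ⟨zmultiplesHom C c, by simpa [natCast_zsmul] using hc⟩

@[simp]
lemma zmodHom_intCast (c : C) (hc : n • c = 0) (k : ℤ) : zmodHom c hc (k : ZMod n) = k • c :=
  ZMod.lift_coe _ _ k

@[simp]
lemma zmodHom_one (c : C) (hc : n • c = 0) : zmodHom c hc 1 = c := by
  simpa using zmodHom_intCast c hc 1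

lemma addHom_ext_zmod {f g : ZMod n →+ C} (h : f 1 = g 1) : f = g := by
  ext c
  obtain ⟨k, rfl⟩ := ZMod.intCast_surjective c
  rw [← zsmul_one, map_zsmul, map_zsmul, h]

def zmodBil (c : C) (hc : n • c = 0) : ZMod n →+ ZMod n →+ C :=
  zmodHom (zmodHom c hc) (addHom_ext_zmod (by simp [hc]))

lemma zmodBil_intCast (c : C) (hc : n • c = 0) (j k : ℤ) :
    zmodBil c hc j k = (j * k) • c := by
  simp [zmodBil, smul_smul]

lemma zmodBil_mem_symBil (c : C) (hc : n • c = 0) : zmodBil c hc ∈ symBil (ZMod n) C := by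
  intro x y
  obtain ⟨j, rfl⟩ := ZMod.intCast_surjective x
  obtain ⟨k, rfl⟩ := ZMod.intCast_surjective y
  rw [zmodBil_intCast, zmodBil_intCast, mul_comm]

lemma nsmul_apply_one_one_eq_zero (β : ZMod n →+ ZMod n →+ C) : n • β 1 1 = 0 := by
  rw [← AddMonoidHom.nsmul_apply, ← map_nsmul, ← Nat.cast_smul_eq_nsmul (ZMod n), smul_eq_mul,
    mul_one, ZMod.natCast_self, map_zero, AddMonoidHom.zero_apply]

noncomputable def symBilZModEquiv : symBil (ZMod n) C ≃+ AddSubgroup.torsionBy C n where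
  toFun β := ⟨β.1 1 1, AddSubgroup.torsionBy.nsmul_iff.2 (nsmul_apply_one_one_eq_zero β.1)⟩
  invFun c := ⟨zmodBil c.1 (AddSubgroup.torsionBy.nsmul_iff.1 c.2),
    zmodBil_mem_symBil _ _⟩
  left_inv β := by
    ext1
    refine addHom_ext_zmod (addHom_ext_zmod ?_)
    simpa using zmodBil_intCast (n := n) (β.1 1 1) (nsmul_apply_one_one_eq_zero β.1) 1 1
  right_inv c := by
    ext1
    simpa using zmodBil_intCast (n := n) c.1 (AddSubgroup.torsionBy.nsmul_iff.1 c.2) 1 1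
  map_add' _ _ := rfl

end ZModBil

section ZModQuad

variable {n : ℕ} {C : Type*} [AddCommGroup C]

lemma isQuadratic_mul_self_zsmul (α : C) : IsQuadratic fun k : ℤ => (k * k) • α := by
  have hpolz : ∀ j k : ℤ, polz (fun k : ℤ => (k * k) • α) j k = (2 * j * k) • α := by
    intro j k
    rw [polz, ← sub_smul, ← sub_smul]
    congr 1
    ring
  refine ⟨fun k => by simp, fun j j' k => ?_, fun j k k' => ?_⟩ <;>
    simp only [hpolz, ← add_zsmul] <;> congr 1 <;> ring

variable [NeZero n]

def zmodQuad (α : C) (c : ZMod n) : C := (c.val * c.val) • α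

/-- The representative of `k` differs from `k` by a multiple `n t`, which changes `k² • α` by
`(2 k n t + n² t²) • α`. -/
lemma zmodQuad_intCast {α : C} (h2 : (2 * n) • α = 0) (hsq : (n * n) • α = 0) (k : ℤ) :
    zmodQuad α (k : ZMod n) = (k * k) • α := by
  have hvanish : ∀ (t : ℤ) (m : ℕ), m • α = 0 → (t * m) • α = 0 := fun t m hm => by
    rw [← smul_smul, natCast_zsmul, hm, smul_zero]
  rw [zmodQuad, ← natCast_zsmul, Nat.cast_mul, ZMod.val_intCast]
  conv_rhs => rw [← Int.emod_add_mul_ediv k n]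
  have : (k % n + n * (k / n)) * (k % n + n * (k / n)) =
      k % n * (k % n) + (k % n * (k / n)) * ((2 * n : ℕ) : ℤ) +
        (k / n * (k / n)) * ((n * n : ℕ) : ℤ) := by
    push_cast; ring
  rw [this, add_zsmul, add_zsmul, hvanish _ _ h2, hvanish _ _ hsq, add_zero, add_zero]

lemma isQuadratic_zmodQuad {α : C} (h2 : (2 * n) • α = 0) (hsq : (n * n) • α = 0) :
    IsQuadratic (zmodQuad (n := n) α) := by
  refine .of_comp_surjective (f := Int.castAddHom (ZMod n)) ZMod.intCast_surjective ?_
  convert isQuadratic_mul_self_zsmul α using 1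
  ext k
  exact zmodQuad_intCast h2 hsq k

lemma IsQuadratic.eq_zmodQuad {q : ZMod n → C} (hq : IsQuadratic q) : q = zmodQuad (q 1) := by
  ext c
  conv_lhs => rw [← ZMod.natCast_zmod_val c, ← nsmul_one]
  exact hq.map_nsmul c.val 1

lemma zmodQuad_mem_quadGroup0 {α : UnitAddCircle} (hα : n • α = 0) :
    zmodQuad (n := n) α ∈ quadGroup0 (ZMod n) := by
  refine ⟨isQuadratic_zmodQuad (by rw [mul_nsmul', hα, smul_zero])
    (by rw [mul_nsmul', hα, smul_zero]), fun c => ?_⟩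
  have hdvd : n ∣ addOrderOf c * c.val := by
    rw [← ZMod.natCast_eq_zero_iff, Nat.cast_mul, ZMod.natCast_zmod_val, ← nsmul_eq_mul,
      addOrderOf_nsmul_eq_zero]
  rw [zmodQuad, ← mul_nsmul', ← mul_assoc]
  exact nsmul_eq_zero_of_dvd (hdvd.mul_right _) hα

lemma mem_quadGroup0_zmod_iff {q : ZMod n → UnitAddCircle} (hq : IsQuadratic q) :
    q ∈ quadGroup0 (ZMod n) ↔ n • q 1 = 0 := by
  refine ⟨fun h => ?_, fun h => hq.eq_zmodQuad ▸ zmodQuad_mem_quadGroup0 h⟩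
  simpa using h.2 1

noncomputable def quadGroup0ZModEquiv :
    quadGroup0 (ZMod n) ≃+ AddSubgroup.torsionBy UnitAddCircle n where
  toFun q := ⟨q.1 1, AddSubgroup.torsionBy.nsmul_iff.2 ((mem_quadGroup0_zmod_iff q.2.1).1 q.2)⟩
  invFun α := ⟨zmodQuad α.1, zmodQuad_mem_quadGroup0 (AddSubgroup.torsionBy.nsmul_iff.1 α.2)⟩
  left_inv q := Subtype.ext q.2.1.eq_zmodQuad.symm
  right_inv α := by
    ext1
    have hα := AddSubgroup.torsionBy.nsmul_iff.1 α.2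
    simpa using zmodQuad_intCast (n := n) (α := α.1) (by rw [mul_nsmul', hα, smul_zero])
      (by rw [mul_nsmul', hα, smul_zero]) 1
  map_add' _ _ := rfl

end ZModQuad

section ZModQuotOdd

variable {n : ℕ}

lemma twoSub_eq_top_of_odd (hn : Odd n) : twoSub (ZMod n) = ⊤ := by
  obtain ⟨k, hk⟩ := hn
  refine (AddSubgroup.eq_top_iff' _).2 fun x => mem_twoSub.2 ⟨(k + 1) • x, ?_⟩
  rw [← add_nsmul, show k + 1 + (k + 1) = n + 1 by omega, succ_nsmul, nsmul_eq_mul,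
    ZMod.natCast_self, zero_mul, zero_add]

lemma quadGroup0'_eq_top_of_odd (hn : Odd n) : quadGroup0' (ZMod n) = ⊤ := by
  refine (AddSubgroup.eq_top_iff' _).2 fun q => ⟨q.2, fun a => ?_⟩
  refine q.2.addOrderOf_nsmul_eq_zero_of_odd (hn.of_dvd_nat ?_)
  exact addOrderOf_dvd_of_nsmul_eq_zero (by simp [nsmul_eq_mul])

noncomputable def quotientTopAddEquiv (G H : Type*) [AddGroup G] [AddGroup H] :
    (G ⧸ (⊤ : AddSubgroup G)) ≃+ (H ⧸ (⊤ : AddSubgroup H)) :=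
  @AddEquiv.ofUnique _ _ (@uniqueOfSubsingleton _ QuotientAddGroup.subsingleton_quotient_top 0)
    (@uniqueOfSubsingleton _ QuotientAddGroup.subsingleton_quotient_top 0) _ _

noncomputable def quadQuotZModEquivOfOdd (hn : Odd n) :
    (QuadGroup (ZMod n) ⧸ quadGroup0' (ZMod n)) ≃+ (ZMod n ⧸ twoSub (ZMod n)) :=
  (QuotientAddGroup.quotientAddEquivOfEq (quadGroup0'_eq_top_of_odd hn)).trans <|
    (quotientTopAddEquiv _ _).trans
      (QuotientAddGroup.quotientAddEquivOfEq (twoSub_eq_top_of_odd hn)).symm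

end ZModQuotOdd

section ZModQuotEven

variable {n : ℕ}

lemma ker_castHom_zmod_two (hn : 2 ∣ n) :
    (ZMod.castHom hn (ZMod 2)).toAddMonoidHom.ker = twoSub (ZMod n) := by
  ext x
  obtain ⟨k, rfl⟩ := ZMod.intCast_surjective x
  rw [AddMonoidHom.mem_ker, mem_twoSub]
  simp only [RingHom.toAddMonoidHom_eq_coe, AddMonoidHom.coe_coe, map_intCast]
  refine ⟨fun h => ?_, fun ⟨y, hy⟩ => ?_⟩
  · obtain ⟨j, rfl⟩ := (ZMod.intCast_zmod_eq_zero_iff_dvd k 2).1 h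
    exact ⟨j, by push_cast; ring⟩
  · rw [← map_intCast (ZMod.castHom hn (ZMod 2)), ← hy, map_add, CharTwo.add_self_eq_zero]

noncomputable def zmodQuotTwoSubEquiv (hn : 2 ∣ n) : (ZMod n ⧸ twoSub (ZMod n)) ≃+ ZMod 2 :=
  (QuotientAddGroup.quotientAddEquivOfEq (ker_castHom_zmod_two hn).symm).trans
    (QuotientAddGroup.quotientKerEquivOfSurjective _ (ZMod.castHom_surjective hn))

lemma mem_range_toAddCircle {N : ℕ} [NeZero N] {x : UnitAddCircle} (hx : N • x = 0) :
    x ∈ (ZMod.toAddCircle (N := N)).range := by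
  obtain ⟨m, -, rfl⟩ := (AddCircle.nsmul_eq_zero_iff (NeZero.pos N)).1 hx
  exact ⟨m, by rw [ZMod.toAddCircle_natCast, mul_one]⟩

noncomputable def quadObstruction : QuadGroup (ZMod n) →+ UnitAddCircle where
  toFun q := n • q.1 1
  map_zero' := smul_zero _
  map_add' _ _ := smul_add _ _ _

lemma two_nsmul_quadObstruction (q : QuadGroup (ZMod n)) : 2 • quadObstruction q = 0 := by
  simpa [quadObstruction, smul_comm 2 n] using q.2.addOrderOf_nsmul_two_nsmul (1 : ZMod n)

variable [NeZero n]

lemma ker_quadObstruction : (quadObstruction (n := n)).ker = quadGroup0' (ZMod n) := by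
  ext q
  exact (mem_quadGroup0_zmod_iff q.2).symm

noncomputable def quadParity : QuadGroup (ZMod n) →+ ZMod 2 :=
  (AddMonoidHom.ofInjective (ZMod.toAddCircle_injective 2)).symm.toAddMonoidHom.comp <|
    quadObstruction.codRestrict _ fun q => mem_range_toAddCircle (two_nsmul_quadObstruction q)

lemma ker_quadParity : (quadParity (n := n)).ker = quadGroup0' (ZMod n) := by
  rw [← ker_quadObstruction]
  ext q
  simp [quadParity]

/-- The witness is `c ↦ c² / 2n`. -/
lemma exists_quadObstruction_ne_zero (hn : 2 ∣ n) :
    ∃ q : QuadGroup (ZMod n), quadObstruction q ≠ 0 := by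
  set α : UnitAddCircle := ZMod.toAddCircle (N := 2 * n) 1
  have hα : ∀ m : ℕ, m • α = 0 ↔ 2 * n ∣ m := fun m => by
    rw [← map_nsmul, nsmul_one, ZMod.toAddCircle_eq_zero, ZMod.natCast_eq_zero_iff]
  have h2 : (2 * n) • α = 0 := (hα _).2 dvd_rfl
  have hsq : (n * n) • α = 0 := (hα _).2 (mul_dvd_mul_right hn n)
  refine ⟨⟨zmodQuad α, isQuadratic_zmodQuad h2 hsq⟩, ?_⟩
  have h1 := zmodQuad_intCast h2 hsq 1
  simp only [Int.cast_one, mul_one, one_smul] at h1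
  simp only [quadObstruction, AddMonoidHom.coe_mk, ZeroHom.coe_mk, h1, ne_eq, hα]
  exact fun h => (NeZero.ne n) (Nat.eq_zero_of_dvd_of_lt h (by have := NeZero.pos n; omega))

lemma quadParity_surjective (hn : 2 ∣ n) : Function.Surjective (quadParity (n := n)) := by
  obtain ⟨q, hq⟩ := exists_quadObstruction_ne_zero hn
  have hq' : quadParity q ≠ 0 := by
    rwa [ne_eq, ← AddMonoidHom.mem_ker, ker_quadParity, ← ker_quadObstruction, AddMonoidHom.mem_ker]
  intro y
  rcases (by decide : ∀ y : ZMod 2, y = 0 ∨ y = 1) y with rfl | rfl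
  · exact ⟨0, map_zero _⟩
  · exact ⟨q, (by decide : ∀ y : ZMod 2, y ≠ 0 → y = 1) _ hq'⟩

noncomputable def quadQuotZModEquivOfEven (hn : 2 ∣ n) :
    (QuadGroup (ZMod n) ⧸ quadGroup0' (ZMod n)) ≃+ (ZMod n ⧸ twoSub (ZMod n)) :=
  (QuotientAddGroup.quotientAddEquivOfEq ker_quadParity.symm).trans <|
    (QuotientAddGroup.quotientKerEquivOfSurjective _ (quadParity_surjective hn)).trans
      (zmodQuotTwoSubEquiv hn).symm

end ZModQuotEven

section Induction

open DirectSum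

theorem directSum_zmod_induction {P : ∀ (G : Type) [AddCommGroup G], Prop}
    (of_addEquiv : ∀ {G H : Type} [AddCommGroup G] [AddCommGroup H], G ≃+ H → P G → P H)
    (zmod : ∀ (n : ℕ) [NeZero n], P (ZMod n))
    (prod : ∀ {G H : Type} [AddCommGroup G] [AddCommGroup H], P G → P H → P (G × H))
    (ι : Type) [Fintype ι] (d : ι → ℕ) [∀ i, NeZero (d i)] : P (⨁ i, ZMod (d i)) := by
  revert d
  refine Fintype.induction_empty_option (P := fun ι _ => ∀ (d : ι → ℕ) [∀ i, NeZero (d i)],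
    P (⨁ i, ZMod (d i))) ?_ ?_ ?_ ι
  · intro α β _ e ih d _
    exact of_addEquiv (equivCongrLeft e.symm).symm (ih fun a => d (e a))
  · intro d _
    exact of_addEquiv AddEquiv.ofUnique (zmod 1)
  · intro α _ ih d _
    exact of_addEquiv addEquivProdDirectSum.symm (prod (zmod _) (ih _))

end Induction

section Assembly

open DirectSum

lemma exists_addEquiv_directSum_zmod (A : Type*) [AddCommGroup A] [Finite A] :
    ∃ (ι : Type) (_ : Fintype ι) (d : ι → ℕ) (_ : ∀ i, NeZero (d i)),
      Nonempty (A ≃+ ⨁ i, ZMod (d i)) := by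
  obtain ⟨ι, _, d, hd, e⟩ := AddCommGroup.equiv_directSum_zmod_of_finite' A
  exact ⟨ι, inferInstance, d, fun i => ⟨by have := hd i; omega⟩, e⟩

lemma nonempty_quadGroup0_addEquiv_symBil (A : Type*) [AddCommGroup A] [Finite A] :
    Nonempty (quadGroup0 A ≃+ symBil A UnitAddCircle) := by
  obtain ⟨ι, _, d, _, ⟨e⟩⟩ := exists_addEquiv_directSum_zmod A
  obtain ⟨f⟩ := directSum_zmod_induction
    (P := fun G _ => Nonempty (quadGroup0 G ≃+ symBil G UnitAddCircle))
    (fun e ⟨f⟩ => ⟨(quadGroup0Congr e).symm.trans (f.trans (symBilCongr e))⟩)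
    (fun _ _ => ⟨quadGroup0ZModEquiv.trans symBilZModEquiv.symm⟩)
    (fun ⟨f⟩ ⟨g⟩ => ⟨quadGroup0ProdEquiv.trans
      ((f.prodCongr (g.prodCongr (.refl _))).trans symBilProdEquiv.symm)⟩)
    ι d
  exact ⟨(quadGroup0Congr e).trans (f.trans (symBilCongr e).symm)⟩

lemma nonempty_quadQuot_addEquiv_twoSubQuot (A : Type*) [AddCommGroup A] [Finite A] :
    Nonempty ((QuadGroup A ⧸ quadGroup0' A) ≃+ (A ⧸ twoSub A)) := by
  obtain ⟨ι, _, d, _, ⟨e⟩⟩ := exists_addEquiv_directSum_zmod A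
  obtain ⟨f⟩ := directSum_zmod_induction
    (P := fun G _ => Nonempty ((QuadGroup G ⧸ quadGroup0' G) ≃+ (G ⧸ twoSub G)))
    (fun e ⟨f⟩ => ⟨(quadQuotCongr e).symm.trans (f.trans (twoSubQuotCongr e))⟩)
    (fun n _ => (Nat.even_or_odd n).elim (fun h => ⟨quadQuotZModEquivOfEven h.two_dvd⟩)
      fun h => ⟨quadQuotZModEquivOfOdd h⟩)
    (fun ⟨f⟩ ⟨g⟩ => ⟨quadQuotProdEquiv.trans ((f.prodCongr g).trans twoSubQuotProdEquiv.symm)⟩)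
    ι d
  exact ⟨(quadQuotCongr e).trans (f.trans (twoSubQuotCongr e).symm)⟩

end Assembly

/-- For a finite abelian group `A` there is a short exact sequence
`0 → Hom(S²(A), ℝ/ℤ) → Quad(A, ℝ/ℤ) → A/2A → 0`:
the kernel `Quad₀` is `Hom(S²(A), ℝ/ℤ)` and the quotient `Quad/Quad₀` is `A/2A`. -/
theorem quadGroup_exact_sequence (A : Type*) [AddCommGroup A] [Finite A] :
    Nonempty (quadGroup0 A ≃+ (symPower2 A →+ AddCircle (1 : ℝ))) ∧
    Nonempty ((QuadGroup A ⧸ quadGroup0' A) ≃+ (A ⧸ twoSub A)) := by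
  obtain ⟨e⟩ := nonempty_quadGroup0_addEquiv_symBil A
  exact ⟨⟨e.trans homSymPower2EquivSymBil.symm⟩, nonempty_quadQuot_addEquiv_twoSubQuot A⟩
end

section
/- Let A = (ℤ/2ℤ)ⁿ. For every quadratic form q ∈ Quad(A, ℝ/ℤ) and each standard basis vector eᵢ one has 4·q(eᵢ) = 0, and the map q ↦ (2q(e₁), ..., 2q(eₙ)) ∈ ((1/2)ℤ/ℤ)ⁿ ≅ (ℤ/2ℤ)ⁿ induces a surjective homomorphism Quad(A, ℝ/ℤ) → (ℤ/2ℤ)ⁿ with kernel Quad₀(A, ℝ/ℤ); in particular the quotient group Quad(A, ℝ/ℤ)/Quad₀(A, ℝ/ℤ) is isomorphic to (ℤ/2ℤ)ⁿ, with the class of q determined by (2q(e₁), ..., 2q(eₙ)). -/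
variable {A B : Type*} [AddCommGroup A] [AddCommGroup B]

/-- The inclusion of `ℤ/2ℤ` as the subgroup `{0, 1/2}` of `ℝ/ℤ`. -/
noncomputable def iotaHalf : ZMod 2 → AddCircle (1 : ℝ) :=
  fun x => (((x.val : ℝ) / 2 : ℝ) : AddCircle (1 : ℝ))

section helpers
variable {A : Type*} [AddCommGroup A]

lemma coe_eq_coe (a b : ℝ) (k : ℤ) (h : a - b = k) : (↑a : AddCircle (1:ℝ)) = ↑b := by
  have h1 : ((a - b : ℝ) : AddCircle (1:ℝ)) = 0 := by
    rw [AddCircle.coe_eq_zero_iff]; exact ⟨k, by simp [h]⟩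
  rwa [QuotientAddGroup.mk_sub, sub_eq_zero] at h1

lemma quad_zero {q : A → AddCircle (1:ℝ)} (hq : IsQuadratic q) : q 0 = 0 := by
  have h := hq.2.1 0 0 0
  rw [add_zero] at h
  have h2 : polz q 0 0 = 0 := by
    have := h.symm
    rwa [add_eq_left] at this
  simpa [polz, neg_eq_zero] using h2

variable (hA : ∀ a : A, a + a = 0)
include hA

lemma polz_two {q : A → AddCircle (1:ℝ)} (hq : IsQuadratic q) (x y : A) :
    2 • polz q x y = 0 := by
  have h := hq.2.1 x x y
  rw [hA x] at h
  have h0 : polz q 0 y = 0 := by simp [polz, quad_zero hq]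
  rw [h0] at h
  rw [two_smul]; exact h.symm

lemma quad_two_smul {q : A → AddCircle (1:ℝ)} (hq : IsQuadratic q) (a : A) :
    2 • q a = - polz q a a := by
  have : polz q a a = q (a + a) - q a - q a := rfl
  rw [hA a, quad_zero hq] at this
  rw [this]; rw [two_smul]; abel

lemma quad_four_smul {q : A → AddCircle (1:ℝ)} (hq : IsQuadratic q) (a : A) :
    4 • q a = 0 := by
  have : (4:ℕ) • q a = 2 • (2 • q a) := by rw [smul_smul]; norm_num
  rw [this, quad_two_smul hA hq, smul_neg, polz_two hA hq, neg_zero]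

lemma quad_two_add {q : A → AddCircle (1:ℝ)} (hq : IsQuadratic q) (a b : A) :
    2 • q (a + b) = 2 • q a + 2 • q b := by
  have h : q (a + b) = polz q a b + q a + q b := by simp [polz]; abel
  rw [h, smul_add, smul_add, polz_two hA hq, zero_add]

end helpers

section half
noncomputable abbrev halfC : AddCircle (1:ℝ) := ((1/2 : ℝ) : AddCircle (1:ℝ))

lemma halfC_ne_zero : halfC ≠ 0 := by
  intro h
  rw [AddCircle.coe_eq_zero_iff] at h
  obtain ⟨n, hn⟩ := h
  rw [zsmul_eq_mul, mul_one] at hn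
  have : (2:ℝ) * n = 1 := by rw [hn]; ring
  have : (2 * n : ℤ) = 1 := by exact_mod_cast this
  omega

lemma halfC_add_halfC : halfC + halfC = 0 := by
  show ((1/2:ℝ) : AddCircle (1:ℝ)) + ((1/2:ℝ) : AddCircle (1:ℝ)) = 0
  rw [← QuotientAddGroup.mk_add, AddCircle.coe_eq_zero_iff]
  exact ⟨1, by norm_num⟩

lemma torsion2 (t : AddCircle (1:ℝ)) (h : 2 • t = 0) : t = 0 ∨ t = halfC := by
  obtain ⟨x, rfl⟩ := QuotientAddGroup.mk_surjective t
  have h2 : ((2 * x : ℝ) : AddCircle (1:ℝ)) = 0 := by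
    rw [show (2:ℝ) * x = x + x by ring, QuotientAddGroup.mk_add, ← two_smul ℕ]; exact h
  rw [AddCircle.coe_eq_zero_iff] at h2
  obtain ⟨n, hn⟩ := h2
  rw [zsmul_eq_mul, mul_one] at hn
  rcases Int.even_or_odd n with ⟨m, hm⟩ | ⟨m, hm⟩
  · left
    rw [AddCircle.coe_eq_zero_iff]
    refine ⟨m, ?_⟩
    rw [zsmul_eq_mul, mul_one]
    have : (2:ℝ) * m = 2 * x := by rw [← hn, hm]; push_cast; ring
    linarith
  · right
    apply coe_eq_coe _ _ m
    have : (2:ℝ) * x = 2 * m + 1 := by rw [← hn, hm]; push_cast; ring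
    linarith

open Classical in
noncomputable def toZ2 (t : AddCircle (1:ℝ)) : ZMod 2 := if t = 0 then 0 else 1

lemma toZ2_zero : toZ2 0 = 0 := by simp [toZ2]

lemma toZ2_halfC : toZ2 halfC = 1 := by rw [toZ2, if_neg halfC_ne_zero]

lemma iotaHalf_toZ2 {t : AddCircle (1:ℝ)} (h : 2 • t = 0) : iotaHalf (toZ2 t) = t := by
  rcases torsion2 t h with rfl | rfl
  · rw [toZ2_zero]; simp [iotaHalf]
  · rw [toZ2_halfC]
    show ((((1:ZMod 2).val : ℝ)/2 : ℝ) : AddCircle (1:ℝ)) = halfC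
    norm_num [ZMod.val_one]

lemma toZ2_add {t s : AddCircle (1:ℝ)} (ht : 2 • t = 0) (hs : 2 • s = 0) :
    toZ2 (t + s) = toZ2 t + toZ2 s := by
  rcases torsion2 t ht with rfl | rfl <;> rcases torsion2 s hs with rfl | rfl
  · rw [add_zero, toZ2_zero, add_zero]
  · rw [zero_add, toZ2_zero, zero_add]
  · rw [add_zero, toZ2_zero, add_zero]
  · rw [halfC_add_halfC, toZ2_zero, toZ2_halfC]; decide

lemma toZ2_eq_zero_iff {t : AddCircle (1:ℝ)} (ht : 2 • t = 0) : toZ2 t = 0 ↔ t = 0 := by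
  constructor
  · intro h
    rcases torsion2 t ht with rfl | rfl
    · rfl
    · rw [toZ2_halfC] at h; exact absurd h (by decide)
  · rintro rfl; exact toZ2_zero
end half

section constr

lemma polz_comm' {A B : Type*} [AddCommGroup A] [AddCommGroup B] (γ : A → B) (x y : A) :
    polz γ x y = polz γ y x := by
  rw [polz, polz, add_comm y x]; abel

lemma zmod2_cases (x : ZMod 2) : x = 0 ∨ x = 1 := by revert x; decide

noncomputable def gq : ZMod 2 → AddCircle (1:ℝ) := fun x => (((x.val : ℝ)/4 : ℝ) : AddCircle (1:ℝ))

lemma gq_zero : gq 0 = 0 := by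
  show (((((0:ZMod 2)).val : ℝ)/4 : ℝ) : AddCircle (1:ℝ)) = 0
  rw [ZMod.val_zero]; norm_num

lemma gq_one : gq 1 = (((1:ℝ)/4 : ℝ) : AddCircle (1:ℝ)) := by
  show (((((1:ZMod 2)).val : ℝ)/4 : ℝ) : AddCircle (1:ℝ)) = _
  rw [ZMod.val_one]; norm_num

lemma two_smul_gq_one : 2 • gq 1 = halfC := by
  rw [gq_one, two_smul, ← QuotientAddGroup.mk_add]
  exact coe_eq_coe _ _ 0 (by norm_num)

lemma gq_bi : ∀ s t u : ZMod 2, polz gq (s + t) u = polz gq s u + polz gq t u := by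
  intro s t u
  rcases zmod2_cases s with rfl | rfl <;> rcases zmod2_cases t with rfl | rfl <;>
    rcases zmod2_cases u with rfl | rfl <;>
    simp only [polz, show (0+0:ZMod 2) = 0 from by decide, show (0+1:ZMod 2) = 1 from by decide,
      show (1+0:ZMod 2) = 1 from by decide, show (1+1:ZMod 2) = 0 from by decide,
      gq_zero, gq_one, sub_zero, zero_sub, sub_self, add_zero, zero_add, neg_zero, neg_neg] <;>
    simp only [← QuotientAddGroup.mk_sub, ← QuotientAddGroup.mk_add, ← QuotientAddGroup.mk_neg] <;>
    first
      | rfl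
      | exact ((AddCircle.coe_eq_zero_iff _).mpr ⟨-1, by norm_num [zsmul_eq_mul]⟩).symm
      | exact ((AddCircle.coe_eq_zero_iff _).mpr ⟨1, by norm_num [zsmul_eq_mul]⟩).symm
      | exact coe_eq_coe _ _ 0 (by norm_num)
      | exact coe_eq_coe _ _ 1 (by norm_num)
      | exact coe_eq_coe _ _ (-1) (by norm_num)

lemma qq_quadratic {n : ℕ} (i : Fin n) :
    IsQuadratic (fun a : Fin n → ZMod 2 => gq (a i)) := by
  refine ⟨fun a => ?_, fun x x' y => ?_, fun x y y' => ?_⟩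
  · show gq (a i) = gq ((-a) i)
    congr 1
    rw [Pi.neg_apply]
    exact (by decide : ∀ x : ZMod 2, x = -x) (a i)
  · show polz gq (x i + x' i) (y i) = polz gq (x i) (y i) + polz gq (x' i) (y i)
    exact gq_bi _ _ _
  · show polz gq (x i) (y i + y' i) = polz gq (x i) (y i) + polz gq (x i) (y' i)
    rw [polz_comm' gq (x i), polz_comm' gq (x i) (y i), polz_comm' gq (x i) (y' i)]
    exact gq_bi _ _ _

lemma quad_two_smul_sum {n : ℕ} {q : (Fin n → ZMod 2) → AddCircle (1:ℝ)}
    (hA : ∀ a : Fin n → ZMod 2, a + a = 0) (hq : IsQuadratic q) (a : Fin n → ZMod 2) :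
    2 • q a = ∑ i, 2 • q (Pi.single i (a i)) := by
  let F : (Fin n → ZMod 2) →+ AddCircle (1:ℝ) :=
    AddMonoidHom.mk' (fun a => 2 • q a) (quad_two_add hA hq)
  calc 2 • q a = F a := rfl
    _ = F (∑ i, Pi.single i (a i)) := by rw [Finset.univ_sum_single]
    _ = ∑ i, F (Pi.single i (a i)) := map_sum F _ _

end constr

set_option maxHeartbeats 2000000 in
/-- For `A = (ℤ/2ℤ)ⁿ`: every quadratic form satisfies `4·q(eᵢ) = 0`, and
`q ↦ (2q(e₁),…,2q(eₙ))` induces a surjective homomorphism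
`Quad(A,ℝ/ℤ) → (ℤ/2ℤ)ⁿ` with kernel `Quad₀(A,ℝ/ℤ)`;
hence `Quad/Quad₀ ≅ (ℤ/2ℤ)ⁿ`. -/
theorem quad_mod_quad0_of_elementary_two_group (n : ℕ) :
    (∀ q : (Fin n → ZMod 2) → AddCircle (1 : ℝ), IsQuadratic q →
      ∀ i : Fin n, (4 : ℕ) • q (Pi.single i 1) = 0) ∧
    ∃ φ : QuadGroup (Fin n → ZMod 2) →+ (Fin n → ZMod 2),
      (∀ (q : QuadGroup (Fin n → ZMod 2)) (i : Fin n),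
        iotaHalf (φ q i) =
          (2 : ℕ) • (q : (Fin n → ZMod 2) → AddCircle (1 : ℝ)) (Pi.single i 1)) ∧
      Function.Surjective φ ∧
      φ.ker = quadGroup0' (Fin n → ZMod 2) := by
  have hA : ∀ a : Fin n → ZMod 2, a + a = 0 := fun a =>
    funext fun i => (by decide : ∀ x : ZMod 2, x + x = 0) (a i)
  have hquad : ∀ q : QuadGroup (Fin n → ZMod 2), IsQuadratic (q : (Fin n → ZMod 2) → AddCircle (1:ℝ)) :=
    fun q => q.2
  have htor : ∀ (q : QuadGroup (Fin n → ZMod 2)) (a : Fin n → ZMod 2),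
      2 • (2 • (q : (Fin n → ZMod 2) → AddCircle (1:ℝ)) a) = 0 := by
    intro q a
    rw [smul_smul, show 2*2 = 4 from rfl]
    exact quad_four_smul hA (hquad q) a
  refine ⟨fun q hq i => quad_four_smul hA hq _, ?_⟩
  refine ⟨AddMonoidHom.mk' (fun q => fun i =>
      toZ2 (2 • (q : (Fin n → ZMod 2) → AddCircle (1:ℝ)) (Pi.single i 1))) ?_, ?_, ?_, ?_⟩
  · intro q r
    funext i
    show toZ2 (2 • ((q : (Fin n → ZMod 2) → AddCircle (1:ℝ)) + r) (Pi.single i 1)) = _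
    rw [Pi.add_apply, smul_add, toZ2_add (htor q _) (htor r _)]
    rfl
  · intro q i
    exact iotaHalf_toZ2 (htor q _)
  · -- surjectivity
    intro v
    have hmem : (fun a : Fin n → ZMod 2 => ∑ i, (v i).val • gq (a i)) ∈
        QuadGroup (Fin n → ZMod 2) := by
      have heq : (fun a : Fin n → ZMod 2 => ∑ i, (v i).val • gq (a i)) =
          ∑ i : Fin n, (v i).val • (fun a : Fin n → ZMod 2 => gq (a i)) := by
        funext a
        simp [Finset.sum_apply]
      rw [heq]
      exact AddSubgroup.sum_mem _ (fun i _ => AddSubgroup.nsmul_mem _ (qq_quadratic i) _)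
    refine ⟨⟨_, hmem⟩, ?_⟩
    funext j
    have hval : (fun a : Fin n → ZMod 2 => ∑ i, (v i).val • gq (a i)) (Pi.single j 1)
        = (v j).val • gq 1 := by
      beta_reduce
      rw [Finset.sum_eq_single j]
      · rw [Pi.single_eq_same]
      · intro i _ hij
        rw [Pi.single_eq_of_ne hij, gq_zero, smul_zero]
      · intro h; exact absurd (Finset.mem_univ j) h
    show toZ2 (2 • (fun a : Fin n → ZMod 2 => ∑ i, (v i).val • gq (a i)) (Pi.single j 1)) = v j
    rw [hval, smul_comm, two_smul_gq_one]
    rcases zmod2_cases (v j) with h | h <;> rw [h]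
    · rw [ZMod.val_zero, zero_smul, toZ2_zero]
    · rw [ZMod.val_one, one_smul, toZ2_halfC]
  · -- kernel
    ext q
    rw [AddMonoidHom.mem_ker]
    constructor
    · intro h
      have h2 : ∀ i, 2 • (q : (Fin n → ZMod 2) → AddCircle (1:ℝ)) (Pi.single i 1) = 0 := by
        intro i
        have hi := congrFun h i
        rw [Pi.zero_apply] at hi
        exact (toZ2_eq_zero_iff (htor q _)).mp hi
      show q.1 ∈ quadGroup0 (Fin n → ZMod 2)
      refine ⟨hquad q, fun a => ?_⟩
      rcases eq_or_ne a 0 with rfl | ha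
      · rw [quad_zero (hquad q), smul_zero]
      · have horder : addOrderOf a = 2 :=
          addOrderOf_eq_prime (by rw [two_smul]; exact hA a) ha
        rw [horder, quad_two_smul_sum hA (hquad q) a]
        apply Finset.sum_eq_zero
        intro i _
        rcases zmod2_cases (a i) with h0 | h1
        · rw [h0, Pi.single_zero, quad_zero (hquad q), smul_zero]
        · rw [h1]; exact h2 i
    · intro hq0
      have hq0' : ∀ a : Fin n → ZMod 2,
          addOrderOf a • (q : (Fin n → ZMod 2) → AddCircle (1:ℝ)) a = 0 :=
        (hq0 : q.1 ∈ quadGroup0 (Fin n → ZMod 2)).2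
      funext i
      have hne : (Pi.single i (1 : ZMod 2) : Fin n → ZMod 2) ≠ 0 := by
        intro h
        have := congrFun h i
        rw [Pi.single_eq_same, Pi.zero_apply] at this
        exact one_ne_zero this
      have horder : addOrderOf (Pi.single i (1 : ZMod 2) : Fin n → ZMod 2) = 2 :=
        addOrderOf_eq_prime (by rw [two_smul]; exact hA _) hne
      have := hq0' (Pi.single i (1:ZMod 2) : Fin n → ZMod 2)
      rw [horder] at this
      show toZ2 _ = 0
      rw [toZ2_eq_zero_iff (htor q _)]
      exact this
end
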